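/- Let X be a finite set, n a positive integer, p₁,…,pₙ probability distributions on X, Θ a nonempty finite index set, and for each θ ∈ Θ let q₁^θ,…,qₙ^θ be probability distributions on X. Let P := p₁ ⊗ ⋯ ⊗ pₙ be the product distribution on Xⁿ and Q := (1/|Θ|)·∑_{θ∈Θ} q₁^θ ⊗ ⋯ ⊗ qₙ^θ the uniform mixture of product distributions. Then there exists a coupling π of P and Q, i.e., a probability distribution on Xⁿ × Xⁿ whose first marginal is P and whose second marginal is Q, such that E_{(x,y)∼π}[ |{i ∈ {1,…,n} : x_i ≠ y_i}| ] ≤ (1/|Θ|)·∑_{θ∈Θ} ∑_{i=1}^{n} TV(p_i, q_i^θ). -/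

import Mathlib

noncomputable section

open Classical in
lemma exists_tv_coupling (X : Type) [Fintype X] (a b : X → ℝ)
    (ha0 : ∀ x, 0 ≤ a x) (ha1 : ∑ x : X, a x = 1)
    (hb0 : ∀ x, 0 ≤ b x) (hb1 : ∑ x : X, b x = 1) :
    ∃ γ : X × X → ℝ, (∀ z, 0 ≤ γ z) ∧
      (∀ x, ∑ y : X, γ (x, y) = a x) ∧
      (∀ y, ∑ x : X, γ (x, y) = b y) ∧
      ∑ z : X × X, γ z * (if z.1 ≠ z.2 then (1:ℝ) else 0)
        ≤ (1/2) * ∑ x : X, |a x - b x| := by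
  classical
  set f : X → ℝ := fun x => a x - min (a x) (b x) with hf
  set g : X → ℝ := fun x => b x - min (a x) (b x) with hg
  have hf0 : ∀ x, 0 ≤ f x := fun x => by simp [hf, min_le_left]
  have hg0 : ∀ x, 0 ≤ g x := fun x => by simp [hg, min_le_right]
  set s : ℝ := ∑ x : X, f x with hs
  have hgs : ∑ x : X, g x = s := by
    have : ∑ x : X, g x - ∑ x : X, f x = 0 := by
      rw [← Finset.sum_sub_distrib]
      simp only [hf, hg]
      have : ∀ x ∈ Finset.univ, (b x - min (a x) (b x)) - (a x - min (a x) (b x)) = b x - a x := by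
        intro x _; ring
      rw [Finset.sum_congr rfl this, Finset.sum_sub_distrib, ha1, hb1]; ring
    linarith
  have habs : ∀ x, |a x - b x| = f x + g x := by
    intro x
    rcases le_total (a x) (b x) with h | h
    · rw [abs_of_nonpos (by linarith)]; simp [hf, hg, min_eq_left h]
    · rw [abs_of_nonneg (by linarith)]; simp [hf, hg, min_eq_right h]
  have htv : (1/2) * ∑ x : X, |a x - b x| = s := by
    rw [Finset.sum_congr rfl (fun x _ => habs x), Finset.sum_add_distrib, ← hs, hgs]; ring
  have hs0 : 0 ≤ s := Finset.sum_nonneg fun x _ => hf0 x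
  rcases eq_or_lt_of_le hs0 with hse | hsp
  · -- s = 0 : a = b
    have hfz : ∀ x, f x = 0 := by
      intro x
      have := (Finset.sum_eq_zero_iff_of_nonneg (fun x _ => hf0 x)).mp hse.symm
      exact this x (Finset.mem_univ x)
    have hgz : ∀ x, g x = 0 := by
      intro x
      have := (Finset.sum_eq_zero_iff_of_nonneg (fun x _ => hg0 x)).mp (by rw [hgs]; exact hse.symm)
      exact this x (Finset.mem_univ x)
    have hab : ∀ x, a x = b x := by
      intro x
      have h1 := hfz x; have h2 := hgz x
      simp only [hf, hg] at h1 h2; linarith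
    refine ⟨fun z => if z.1 = z.2 then a z.1 else 0, ?_, ?_, ?_, ?_⟩
    · intro z; dsimp only; split <;> [exact ha0 _; exact le_rfl]
    · intro x; simp
    · intro y; simp [hab y]
    · rw [htv, ← hse]
      apply le_of_eq
      apply Finset.sum_eq_zero
      rintro ⟨x, y⟩ _
      by_cases h : x = y <;> simp [h]
  · -- s > 0
    have hne : s ≠ 0 := ne_of_gt hsp
    have erow : ∀ x, ∑ y : X, f x * g y / s = f x := by
      intro x
      rw [← Finset.sum_div, ← Finset.mul_sum, hgs, mul_div_assoc, div_self hne, mul_one]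
    refine ⟨fun z => (if z.1 = z.2 then min (a z.1) (b z.1) else 0) + f z.1 * g z.2 / s,
      ?_, ?_, ?_, ?_⟩
    · rintro ⟨x, y⟩
      have h1 : (0:ℝ) ≤ if x = y then min (a x) (b x) else 0 := by
        split
        · exact le_min (ha0 x) (hb0 x)
        · exact le_rfl
      have h2 : 0 ≤ f x * g y / s := div_nonneg (mul_nonneg (hf0 x) (hg0 y)) hs0
      exact add_nonneg h1 h2
    · intro x
      rw [Finset.sum_add_distrib]
      have e1 : ∑ y : X, (if x = y then min (a x) (b x) else 0) = min (a x) (b x) := by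
        simp
      rw [e1, erow]; simp [hf]
    · intro y
      rw [Finset.sum_add_distrib]
      have e1 : ∑ x : X, (if x = y then min (a x) (b x) else 0) = min (a y) (b y) := by
        simp
      have e2 : ∑ x : X, f x * g y / s = g y := by
        rw [← Finset.sum_div, ← Finset.sum_mul, ← hs, mul_comm, mul_div_assoc, div_self hne,
          mul_one]
      rw [e1, e2]; simp [hg]
    · rw [htv]
      have hb : ∀ z : X × X,
          ((if z.1 = z.2 then min (a z.1) (b z.1) else 0) + f z.1 * g z.2 / s) *
            (if z.1 ≠ z.2 then (1:ℝ) else 0) ≤ f z.1 * g z.2 / s := by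
        rintro ⟨x, y⟩
        by_cases h : x = y
        · simp [h, div_nonneg (mul_nonneg (hf0 _) (hg0 _)) hs0]
        · simp [h]
      calc ∑ z : X × X, _ ≤ ∑ z : X × X, f z.1 * g z.2 / s :=
            Finset.sum_le_sum fun z _ => hb z
        _ = s := by
            rw [Fintype.sum_prod_type]
            rw [Finset.sum_congr rfl (fun x _ => erow x)]

/-- Earth-mover (expected-Hamming-distance) bound between a product distribution and a
uniform mixture of product distributions: there is a coupling `π` of
`P = p₁ ⊗ ⋯ ⊗ pₙ` and `Q = (1/|Θ|)∑_θ q₁^θ ⊗ ⋯ ⊗ qₙ^θ` whose expected Hamming distance is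
at most `(1/|Θ|)·∑_θ ∑_i TV(p_i, q_i^θ)`. -/
theorem coupling_product_vs_mixture
    (X : Type) [Fintype X] (n : ℕ) (hn : 0 < n)
    (Θ : Type) [Fintype Θ] [Nonempty Θ]
    (p : Fin n → X → ℝ)
    (hp : ∀ i, (∀ x, 0 ≤ p i x) ∧ ∑ x : X, p i x = 1)
    (q : Θ → Fin n → X → ℝ)
    (hq : ∀ θ i, (∀ x, 0 ≤ q θ i x) ∧ ∑ x : X, q θ i x = 1) :
    ∃ π : (Fin n → X) × (Fin n → X) → ℝ,
      (∀ z, 0 ≤ π z) ∧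
      -- first marginal is the product distribution `P`
      (∀ x : Fin n → X, ∑ y : Fin n → X, π (x, y) = ∏ i, p i (x i)) ∧
      -- second marginal is the mixture `Q`
      (∀ y : Fin n → X, ∑ x : Fin n → X, π (x, y)
        = (1 / (Fintype.card Θ : ℝ)) * ∑ θ : Θ, ∏ i, q θ i (y i)) ∧
      -- expected Hamming distance bound
      (∑ z : (Fin n → X) × (Fin n → X),
          π z * (Nat.card {i : Fin n // z.1 i ≠ z.2 i} : ℝ)
        ≤ (1 / (Fintype.card Θ : ℝ)) *
            ∑ θ : Θ, ∑ i : Fin n, (1 / 2) * ∑ x : X, |p i x - q θ i x|) := by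
  classical
  choose γ hγ0 hγ1 hγ2 hγ3 using fun (θ : Θ) (i : Fin n) =>
    exists_tv_coupling X (p i) (q θ i) (hp i).1 (hp i).2 (hq θ i).1 (hq θ i).2
  set c : ℝ := (Fintype.card Θ : ℝ) with hc
  have hcpos : 0 < c := by
    simp only [hc]
    exact_mod_cast Fintype.card_pos
  have hcne : c ≠ 0 := ne_of_gt hcpos
  -- total mass of each coupling
  have hmass : ∀ θ j, ∑ u : X × X, γ θ j u = 1 := by
    intro θ j
    rw [Fintype.sum_prod_type]
    rw [Finset.sum_congr rfl (fun x _ => hγ1 θ j x)]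
    exact (hp j).2
  refine ⟨fun z => (1 / c) * ∑ θ : Θ, ∏ i, γ θ i (z.1 i, z.2 i), ?_, ?_, ?_, ?_⟩
  · intro z
    apply mul_nonneg (by positivity)
    exact Finset.sum_nonneg fun θ _ =>
      Finset.prod_nonneg fun i _ => hγ0 θ i _
  · intro x
    rw [← Finset.mul_sum, Finset.sum_comm]
    have key : ∀ θ : Θ, ∑ y : Fin n → X, ∏ i, γ θ i (x i, y i) = ∏ i, p i (x i) := by
      intro θ
      rw [← Fintype.prod_sum (f := fun i u => γ θ i (x i, u))]
      exact Finset.prod_congr rfl fun i _ => hγ1 θ i (x i)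
    rw [Finset.sum_congr rfl (fun θ _ => key θ), Finset.sum_const, Finset.card_univ,
      nsmul_eq_mul, ← hc]
    field_simp
  · intro y
    rw [← Finset.mul_sum, Finset.sum_comm]
    congr 1
    refine Finset.sum_congr rfl fun θ _ => ?_
    rw [← Fintype.prod_sum (f := fun i u => γ θ i (u, y i))]
    exact Finset.prod_congr rfl fun i _ => hγ2 θ i (y i)
  · -- Hamming bound
    have hcard : ∀ x y : Fin n → X,
        (Nat.card {i : Fin n // x i ≠ y i} : ℝ) = ∑ i, if x i ≠ y i then (1:ℝ) else 0 := by
      intro x y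
      rw [Nat.card_eq_fintype_card, Fintype.card_subtype, Finset.card_filter]
      push_cast [apply_ite (Nat.cast : ℕ → ℝ)]
      rfl
    simp only [hcard]
    -- per θ bound
    have key : ∀ θ : Θ,
        ∑ z : (Fin n → X) × (Fin n → X),
          (∏ i, γ θ i (z.1 i, z.2 i)) * ∑ i, (if z.1 i ≠ z.2 i then (1:ℝ) else 0)
        ≤ ∑ i : Fin n, (1 / 2) * ∑ x : X, |p i x - q θ i x| := by
      intro θ
      have swap : ∑ z : (Fin n → X) × (Fin n → X),
          (∏ i, γ θ i (z.1 i, z.2 i)) * ∑ i, (if z.1 i ≠ z.2 i then (1:ℝ) else 0)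
          = ∑ i : Fin n, ∑ z : (Fin n → X) × (Fin n → X),
              (∏ j, γ θ j (z.1 j, z.2 j)) * (if z.1 i ≠ z.2 i then (1:ℝ) else 0) := by
        rw [Finset.sum_comm]
        exact Finset.sum_congr rfl fun z _ => Finset.mul_sum _ _ _
      rw [swap]
      apply Finset.sum_le_sum
      intro i _
      -- transfer to functions into pairs
      set e := (Equiv.arrowProdEquivProdArrow (Fin n) (fun _ => X) (fun _ => X))
      set F : Fin n → X × X → ℝ := fun j u =>
        γ θ j u * (if j = i then (if u.1 ≠ u.2 then (1:ℝ) else 0) else 1) with hF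
      have step1 : ∑ z : (Fin n → X) × (Fin n → X),
          (∏ j, γ θ j (z.1 j, z.2 j)) * (if z.1 i ≠ z.2 i then (1:ℝ) else 0)
          = ∑ w : Fin n → X × X, ∏ j, F j (w j) := by
        refine (Fintype.sum_equiv e _ _ ?_).symm
        intro w
        have hprod : ∀ j, ((e w).1 j, (e w).2 j) = w j := fun j => rfl
        simp only [hF, Finset.prod_mul_distrib, hprod,
          Finset.prod_ite_eq' Finset.univ i, Finset.mem_univ, if_true]
        rfl
      rw [step1, ← Fintype.prod_sum (f := F)]
      have hfact : ∀ j, j ≠ i → ∑ u : X × X, F j u = 1 := by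
        intro j hj
        simp only [hF, if_neg hj, mul_one]
        exact hmass θ j
      rw [Finset.prod_eq_single i (fun j _ hj => hfact j hj) (by simp)]
      simp only [hF, if_pos rfl]
      exact hγ3 θ i
    -- combine
    have expand : ∑ z : (Fin n → X) × (Fin n → X),
        ((1 / c) * ∑ θ : Θ, ∏ i, γ θ i (z.1 i, z.2 i)) *
          ∑ i, (if z.1 i ≠ z.2 i then (1:ℝ) else 0)
        = (1 / c) * ∑ θ : Θ, ∑ z : (Fin n → X) × (Fin n → X),
            (∏ i, γ θ i (z.1 i, z.2 i)) * ∑ i, (if z.1 i ≠ z.2 i then (1:ℝ) else 0) := by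
      calc ∑ z : (Fin n → X) × (Fin n → X),
            ((1 / c) * ∑ θ : Θ, ∏ i, γ θ i (z.1 i, z.2 i)) *
              ∑ i, (if z.1 i ≠ z.2 i then (1:ℝ) else 0)
          = ∑ z : (Fin n → X) × (Fin n → X), ∑ θ : Θ,
              (1 / c) * ((∏ i, γ θ i (z.1 i, z.2 i)) *
                ∑ i, (if z.1 i ≠ z.2 i then (1:ℝ) else 0)) := by
            refine Finset.sum_congr rfl fun z _ => ?_
            rw [mul_assoc, Finset.sum_mul, Finset.mul_sum]
        _ = ∑ θ : Θ, ∑ z : (Fin n → X) × (Fin n → X),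
              (1 / c) * ((∏ i, γ θ i (z.1 i, z.2 i)) *
                ∑ i, (if z.1 i ≠ z.2 i then (1:ℝ) else 0)) := Finset.sum_comm
        _ = (1 / c) * ∑ θ : Θ, ∑ z : (Fin n → X) × (Fin n → X),
              (∏ i, γ θ i (z.1 i, z.2 i)) *
                ∑ i, (if z.1 i ≠ z.2 i then (1:ℝ) else 0) := by
            rw [Finset.mul_sum]
            exact Finset.sum_congr rfl fun θ _ => (Finset.mul_sum _ _ _).symm
    rw [expand]
    apply mul_le_mul_of_nonneg_left _ (by positivity)
    exact Finset.sum_le_sum fun θ _ => key θ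

end
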